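/- arXiv:1508.03830 — 2 statements merged into one kernel-verified Lean document; each statement's English description precedes it below -/
import Mathlib

section
/- Let K be a field of characteristic 0, f ∈ K[x] nonconstant, and n a positive integer. Define Φ_{n,f}(x) = ∏_{d|n} (f^d(x) − x)^{μ(n/d)} (which is a polynomial). If ℓ(x) = ax + b with a ≠ 0 and g = ℓ⁻¹ ∘ f ∘ ℓ, then Φ_{n,f}(ℓ(x)) = a^{δ_{1n}} · Φ_{n,g}(x), where δ_{1n} is 1 if n = 1 and 0 otherwise. -/
open Polynomial ArithmeticFunction

/-- `d`-fold composition of a polynomial, with `polyIter f 0 = X`. -/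
noncomputable def polyIter {K : Type*} [Field K] (f : K[X]) : ℕ → K[X]
  | 0 => X
  | d + 1 => f.comp (polyIter f d)

/-- The `n`-th dynatomic rational function `∏_{d ∣ n} (f^d(x) - x)^{μ(n/d)}`. -/
noncomputable def dynFrac {K : Type*} [Field K] (f : K[X]) (n : ℕ) : RatFunc K :=
  ∏ d ∈ n.divisors, (algebraMap K[X] (RatFunc K) (polyIter f d - X)) ^ (moebius (n / d))

theorem stmt_3 {K : Type*} [Field K] [CharZero K] (f : K[X]) (hf : 1 ≤ f.natDegree)
    (n : ℕ) (hn : 1 ≤ n) (a b : K) (ha : a ≠ 0) (ℓ g : K[X])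
    (hℓ : ℓ = C a * X + C b)
    (hg : g = (C a⁻¹ * (X - C b)).comp (f.comp ℓ))
    (Φf Φg : K[X])
    (hΦf : algebraMap K[X] (RatFunc K) Φf = dynFrac f n)
    (hΦg : algebraMap K[X] (RatFunc K) Φg = dynFrac g n) :
    Φf.comp ℓ = (if n = 1 then C a else 1) * Φg := by
  classical
  set Linv : K[X] := C a⁻¹ * (X - C b) with hLinv
  have hCinv : C a⁻¹ * C a = 1 := by rw [← C_mul, inv_mul_cancel₀ ha, C_1]
  have hinvℓ : C a⁻¹ * ℓ = X + C a⁻¹ * C b := by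
    rw [hℓ, mul_add, ← mul_assoc, hCinv, one_mul]
  have hLinvP : ∀ p : K[X], Linv.comp p = C a⁻¹ * (p - C b) := by
    intro p; rw [hLinv]; simp [mul_comp, sub_comp]
  have hℓLinv : ℓ.comp Linv = X := by
    conv_lhs => rw [hℓ]
    simp only [add_comp, mul_comp, C_comp, X_comp, hLinv]
    rw [← mul_assoc, ← C_mul, mul_inv_cancel₀ ha, C_1, one_mul]
    ring
  have hiter : ∀ d, polyIter g d = Linv.comp ((polyIter f d).comp ℓ) := by
    intro d
    induction d with
    | zero =>
      show X = Linv.comp (X.comp ℓ)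
      rw [X_comp, hLinvP, mul_sub, hinvℓ]
      ring
    | succ d ih =>
      show g.comp (polyIter g d) = Linv.comp ((f.comp (polyIter f d)).comp ℓ)
      rw [ih, hg, comp_assoc, comp_assoc f ℓ, ← comp_assoc ℓ Linv, hℓLinv, X_comp,
        ← comp_assoc f]
  have hQ : ∀ d, polyIter g d - X = C a⁻¹ * ((polyIter f d - X).comp ℓ) := by
    intro d
    rw [hiter d, hLinvP, sub_comp, X_comp, mul_sub, mul_sub, hinvℓ]
    ring
  have hAinj : Function.Injective (algebraMap K[X] (RatFunc K)) :=
    IsFractionRing.injective K[X] (RatFunc K)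
  have hcompinj : Function.Injective (fun p : K[X] => p.comp ℓ) := by
    intro p q hpq
    have h2 := congrArg (fun r : K[X] => r.comp Linv) hpq
    simpa only [comp_assoc, hℓLinv, comp_X] using h2
  have hφinj : Function.Injective
      ((algebraMap K[X] (RatFunc K)).comp (compRingHom ℓ)) := hAinj.comp hcompinj
  have hΨA : ∀ p : K[X],
      IsFractionRing.lift hφinj (algebraMap K[X] (RatFunc K) p)
        = algebraMap K[X] (RatFunc K) (p.comp ℓ) :=
    fun p => IsFractionRing.lift_algebraMap hφinj p
  have key1 : algebraMap K[X] (RatFunc K) (Φf.comp ℓ)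
      = ∏ d ∈ n.divisors,
          (algebraMap K[X] (RatFunc K) ((polyIter f d - X).comp ℓ)) ^ (moebius (n / d)) := by
    rw [← hΨA, hΦf]
    simp only [dynFrac]
    rw [map_prod]
    refine Finset.prod_congr rfl fun d _ => ?_
    rw [map_zpow₀, hΨA]
  have hx : algebraMap K[X] (RatFunc K) (C a⁻¹) ≠ 0 := by
    rw [map_ne_zero_iff _ hAinj]
    exact C_ne_zero.mpr (inv_ne_zero ha)
  have hxprod : ∀ (s : Finset ℕ) (e : ℕ → ℤ),
      ∏ d ∈ s, (algebraMap K[X] (RatFunc K) (C a⁻¹)) ^ e d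
        = (algebraMap K[X] (RatFunc K) (C a⁻¹)) ^ (∑ d ∈ s, e d) := by
    intro s e
    refine Finset.induction_on s (by simp) ?_
    intro c s hc ih
    rw [Finset.prod_insert hc, Finset.sum_insert hc, ih, zpow_add₀ hx]
  have key2 : dynFrac g n =
      (algebraMap K[X] (RatFunc K) (C a⁻¹)) ^ (∑ d ∈ n.divisors, moebius (n / d)) *
        ∏ d ∈ n.divisors,
          (algebraMap K[X] (RatFunc K) ((polyIter f d - X).comp ℓ)) ^ (moebius (n / d)) := by
    simp only [dynFrac]
    rw [← hxprod, ← Finset.prod_mul_distrib]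
    exact Finset.prod_congr rfl fun d _ => by rw [hQ d, map_mul, mul_zpow]
  have hS : (∑ d ∈ n.divisors, moebius (n / d)) = if n = 1 then 1 else 0 := by
    rw [Nat.sum_div_divisors n moebius, ← ArithmeticFunction.coe_mul_zeta_apply,
      moebius_mul_coe_zeta, ArithmeticFunction.one_apply]
  apply hAinj
  rw [key1, map_mul, hΦg, key2, hS]
  by_cases h1 : n = 1
  · rw [if_pos h1, if_pos h1, zpow_one, ← mul_assoc, ← map_mul, ← C_mul,
      mul_inv_cancel₀ ha, C_1, map_one, one_mul]
  · rw [if_neg h1, if_neg h1, zpow_zero, one_mul, map_one, one_mul]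
end

section
/- For c = −5/4, the fourth dynatomic polynomial satisfies 2¹²·Φ_{4,c}(x) = P(2x)·Q(2x)², where P(x) = x⁸ − 4x⁷ − 16x⁶ + 84x⁵ − 6x⁴ − 364x³ + 584x² − 836x + 1021 and Q(x) = x² + 2x − 1. -/
open Polynomial

/-- For `c = -5/4`, the fourth dynatomic polynomial
`Φ_{4,c} = (f_c⁴(x) - x)/(f_c²(x) - x)` satisfies `2¹²·Φ_{4,c}(x) = P(2x)·Q(2x)²`. -/
theorem stmt_18 (fc Φ P Q : ℚ[X])
    (hfc : fc = X ^ 2 + C (-5/4 : ℚ))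
    (hΦ : Φ * (fc.comp fc - X) = fc.comp (fc.comp (fc.comp fc)) - X)
    (hP : P = X ^ 8 - 4 * X ^ 7 - 16 * X ^ 6 + 84 * X ^ 5 - 6 * X ^ 4
        - 364 * X ^ 3 + 584 * X ^ 2 - 836 * X + 1021)
    (hQ : Q = X ^ 2 + 2 * X - 1) :
    C (2 ^ 12 : ℚ) * Φ = P.comp (C 2 * X) * (Q.comp (C 2 * X)) ^ 2 := by
  have hne : fc.comp fc - X ≠ 0 := by
    intro h
    have := congrArg (Polynomial.eval (0 : ℚ)) h
    simp [hfc] at this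
    norm_num at this
  apply mul_right_cancel₀ hne
  rw [mul_assoc, hΦ, hfc, hP, hQ]
  apply Polynomial.funext
  intro x
  simp only [eval_mul, eval_add, eval_sub, eval_pow, eval_comp, eval_C, eval_X,
    eval_ofNat, eval_one]
  ring
end
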